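/- arXiv:2105.06072 — 4 statements merged into one kernel-verified Lean document; each statement's English description precedes it below -/
import Mathlib

section
/- For any real number α > 0 and any x ∈ [(2α+1)/(2α+2), 1], it holds that (1/(2α))·(1 − x^α) ≤ x^α·(1 − x). -/
theorem stmt_1 (α x : ℝ) (hα : 0 < α)
    (hx : x ∈ Set.Icc ((2 * α + 1) / (2 * α + 2)) 1) :
    (1 / (2 * α)) * (1 - x ^ α) ≤ x ^ α * (1 - x) := by
  obtain ⟨hx1, hx2⟩ := hx
  have hα2 : (0:ℝ) < 2 * α + 2 := by linarith
  have hxpos : 0 < x := by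
    have h : 0 < (2 * α + 1) / (2 * α + 2) := by positivity
    linarith
  have hlog : 1 - x⁻¹ ≤ Real.log x := by
    have h := Real.log_le_sub_one_of_pos (x := 1/x) (by positivity)
    rw [one_div, Real.log_inv] at h
    linarith
  have hp : 1 - α * ((1 - x)/x) ≤ x ^ α := by
    have h1 : x ^ α = Real.exp (α * Real.log x) := by
      rw [Real.rpow_def_of_pos hxpos, mul_comm]
    have h2 : α * (1 - x⁻¹) ≤ α * Real.log x :=
      mul_le_mul_of_nonneg_left hlog (le_of_lt hα)
    have h3 : α * (1 - x⁻¹) + 1 ≤ Real.exp (α * (1 - x⁻¹)) :=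
      Real.add_one_le_exp _
    have h4 : Real.exp (α * (1 - x⁻¹)) ≤ Real.exp (α * Real.log x) :=
      Real.exp_le_exp.2 h2
    have h5 : α * ((1 - x)/x) = -(α * (1 - x⁻¹)) := by
      field_simp
      ring
    rw [h1, h5]
    linarith
  have hp' : x - α * (1 - x) ≤ x * x ^ α := by
    have h6 := mul_le_mul_of_nonneg_left hp (le_of_lt hxpos)
    have hxa : x * (1 - α * ((1 - x)/x)) = x - α * (1 - x) := by
      field_simp
    rw [hxa] at h6
    exact h6
  have hx1' : 2 * α + 1 ≤ x * (2 * α + 2) := by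
    rw [div_le_iff₀ hα2] at hx1
    linarith
  have hppos : 0 < x ^ α := Real.rpow_pos_of_pos hxpos α
  rw [div_mul_eq_mul_div, one_mul, div_le_iff₀ (by linarith : (0:ℝ) < 2 * α)]
  have hkey := mul_le_mul_of_nonneg_left hp'
    (by nlinarith : (0:ℝ) ≤ 1 + 2*α - 2*α*x)
  have hA : 0 ≤ α * ((x * (2*α+2) - (2*α+1)) * (1 - x)) :=
    mul_nonneg hα.le (mul_nonneg (by linarith) (by linarith))
  nlinarith [hkey, hA, hxpos, hppos, mul_pos hxpos hppos]
end

section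
/- Let K ≥ 1, r ∈ [0,1]^K, and π_θ = softmax(θ) for θ ∈ ℝ^K. Let a* be an action maximizing r and π* the point mass at a*. Then ‖d(π_θᵀr)/dθ‖₂ ≥ π_θ(a*)·((π* − π_θ)ᵀ r). -/
theorem stmt_8 (K : ℕ) (hK : 1 ≤ K) (r : Fin K → ℝ)
    (hr : ∀ a, r a ∈ Set.Icc (0:ℝ) 1)
    (astar : Fin K) (hastar : ∀ a, r a ≤ r astar)
    (θ : Fin K → ℝ) :
    let π : Fin K → ℝ := fun a => Real.exp (θ a) / ∑ a', Real.exp (θ a')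
    Real.sqrt (∑ a, (π a * (r a - ∑ a', π a' * r a')) ^ 2) ≥
      π astar * (r astar - ∑ a, π a * r a) := by
  intro π
  have hS : 0 < ∑ a', Real.exp (θ a') := by
    apply Finset.sum_pos (fun i _ => Real.exp_pos _)
    exact Finset.univ_nonempty_iff.mpr ⟨⟨0, hK⟩⟩
  have hπ : ∀ a, 0 ≤ π a := fun a => div_nonneg (Real.exp_pos _).le hS.le
  have hsum1 : ∑ a, π a = 1 := by
    simp only [π, ← Finset.sum_div]
    exact div_self hS.ne'
  have hE : ∑ a, π a * r a ≤ r astar := by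
    calc ∑ a, π a * r a ≤ ∑ a, π a * r astar :=
          Finset.sum_le_sum fun a _ => mul_le_mul_of_nonneg_left (hastar a) (hπ a)
      _ = r astar := by rw [← Finset.sum_mul, hsum1, one_mul]
  have hx : 0 ≤ π astar * (r astar - ∑ a, π a * r a) :=
    mul_nonneg (hπ astar) (by linarith)
  have h1 : (π astar * (r astar - ∑ a', π a' * r a')) ^ 2 ≤
      ∑ a, (π a * (r a - ∑ a', π a' * r a')) ^ 2 :=
    Finset.single_le_sum (f := fun a => (π a * (r a - ∑ a', π a' * r a')) ^ 2)
      (fun a _ => sq_nonneg _) (Finset.mem_univ astar)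
  calc π astar * (r astar - ∑ a, π a * r a)
      = Real.sqrt ((π astar * (r astar - ∑ a', π a' * r a')) ^ 2) := by
        rw [Real.sqrt_sq hx]
    _ ≤ Real.sqrt (∑ a, (π a * (r a - ∑ a', π a' * r a')) ^ 2) :=
        Real.sqrt_le_sqrt h1
end

section
/- Let π_θ = softmax(θ) for θ ∈ ℝ^K and r ∈ [0,1]^K. For any vector y ∈ ℝ^K, the Hessian S of θ ↦ π_θᵀr satisfies |yᵀ S y| ≤ 3·‖H(π_θ) r‖₂·‖y‖₂², where H(π) = diag(π) − ππᵀ. -/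
theorem stmt_9 (K : ℕ) (r : Fin K → ℝ) (θ : Fin K → ℝ) (y : Fin K → ℝ) :
    let π : Fin K → ℝ := fun a => Real.exp (θ a) / ∑ a', Real.exp (θ a')
    let pr : ℝ := ∑ a, π a * r a
    let S : Fin K → Fin K → ℝ := fun i j =>
      (if i = j then π j * (r i - pr) else 0)
        - π i * π j * (r i - pr) - π i * π j * (r j - pr)
    let Hr : Fin K → ℝ := fun a => π a * (r a - pr)
    |∑ i, ∑ j, S i j * y i * y j| ≤
      3 * Real.sqrt (∑ a, Hr a ^ 2) * (∑ a, y a ^ 2) := by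
  intro π pr S Hr
  rcases Nat.eq_zero_or_pos K with hK | hK
  · subst hK
    simp
  -- notation
  set A : ℝ := ∑ i, Hr i * y i ^ 2 with hA
  set B : ℝ := ∑ i, Hr i * y i with hB
  set C : ℝ := ∑ i, π i * y i with hC
  set Y : ℝ := ∑ a, y a ^ 2 with hY
  set nH : ℝ := Real.sqrt (∑ a, Hr a ^ 2) with hnH
  have hYnn : 0 ≤ Y := Finset.sum_nonneg fun i _ => sq_nonneg _
  have hnHnn : 0 ≤ nH := Real.sqrt_nonneg _
  -- the key algebraic identity
  have key : (∑ i, ∑ j, S i j * y i * y j) = A - 2 * (B * C) := by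
    have h1 : ∀ i : Fin K, ∑ j, S i j * y i * y j
        = Hr i * y i ^ 2 - Hr i * y i * C - π i * y i * B := by
      intro i
      have : ∀ j : Fin K, S i j * y i * y j
          = (if i = j then π j * (r i - pr) * (y i * y j) else 0)
            - Hr i * y i * (π j * y j) - π i * y i * (Hr j * y j) := by
        intro j
        simp only [S, Hr]
        split <;> ring
      rw [Finset.sum_congr rfl fun j _ => this j]
      rw [Finset.sum_sub_distrib, Finset.sum_sub_distrib, Finset.sum_ite_eq,
        ← Finset.mul_sum, ← Finset.mul_sum]
      simp only [Finset.mem_univ, if_true, ← hB, ← hC, Hr]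
      ring
    rw [Finset.sum_congr rfl fun i _ => h1 i, Finset.sum_sub_distrib,
      Finset.sum_sub_distrib, ← Finset.sum_mul, ← Finset.sum_mul, ← hA, ← hB, ← hC]
    ring
  rw [key]
  -- bounds
  have hB2 : B ^ 2 ≤ (∑ a, Hr a ^ 2) * Y :=
    Finset.sum_mul_sq_le_sq_mul_sq Finset.univ Hr y
  have hBbd : |B| ≤ nH * Real.sqrt Y := by
    rw [← Real.sqrt_sq_eq_abs, hnH, ← Real.sqrt_mul (Finset.sum_nonneg fun i _ => sq_nonneg _)]
    exact Real.sqrt_le_sqrt hB2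
  have hy2Y : ∀ j : Fin K, y j ^ 2 ≤ Y := by
    intro j
    exact Finset.single_le_sum (f := fun a => y a ^ 2) (fun i _ => sq_nonneg _)
      (Finset.mem_univ j)
  have hA2 : A ^ 2 ≤ (∑ a, Hr a ^ 2) * Y ^ 2 := by
    calc A ^ 2 ≤ (∑ a, Hr a ^ 2) * (∑ a, (y a ^ 2) ^ 2) :=
          Finset.sum_mul_sq_le_sq_mul_sq Finset.univ Hr (fun a => y a ^ 2)
      _ ≤ (∑ a, Hr a ^ 2) * Y ^ 2 := by
          apply mul_le_mul_of_nonneg_left _ (Finset.sum_nonneg fun i _ => sq_nonneg _)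
          calc (∑ a, (y a ^ 2) ^ 2) ≤ ∑ a, y a ^ 2 * Y :=
                Finset.sum_le_sum fun a _ => by
                  rw [pow_two]
                  exact mul_le_mul_of_nonneg_left (hy2Y a) (sq_nonneg _)
            _ = Y ^ 2 := by rw [← Finset.sum_mul, ← hY, pow_two]
  have hAbd : |A| ≤ nH * Y := by
    rw [← Real.sqrt_sq_eq_abs, hnH,
      ← Real.sqrt_sq hYnn, ← Real.sqrt_mul (Finset.sum_nonneg fun i _ => sq_nonneg _)]
    exact Real.sqrt_le_sqrt hA2
  -- π sums to 1
  have hEpos : 0 < ∑ a', Real.exp (θ a') :=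
    Finset.sum_pos (fun i _ => Real.exp_pos _) (Finset.univ_nonempty_iff.2 (by
      simpa using Fin.pos_iff_nonempty.mp hK))
  have hπnn : ∀ j, 0 ≤ π j := fun j => div_nonneg (Real.exp_pos _).le hEpos.le
  have hπsum : (∑ a, π a) = 1 := by
    simp only [π, ← Finset.sum_div]
    exact div_self hEpos.ne'
  have hCbd : |C| ≤ Real.sqrt Y := by
    calc |C| ≤ ∑ j, |π j * y j| := Finset.abs_sum_le_sum_abs _ _
      _ ≤ ∑ j, π j * Real.sqrt Y := by
          apply Finset.sum_le_sum
          intro j _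
          rw [abs_mul, abs_of_nonneg (hπnn j)]
          apply mul_le_mul_of_nonneg_left _ (hπnn j)
          rw [← Real.sqrt_sq_eq_abs]
          exact Real.sqrt_le_sqrt (hy2Y j)
      _ = Real.sqrt Y := by rw [← Finset.sum_mul, hπsum, one_mul]
  -- combine
  calc |A - 2 * (B * C)| ≤ |A| + 2 * (|B| * |C|) := by
        calc |A - 2 * (B * C)| ≤ |A| + |2 * (B * C)| := abs_sub _ _
          _ = |A| + 2 * (|B| * |C|) := by rw [abs_mul, abs_mul, abs_two]
    _ ≤ nH * Y + 2 * ((nH * Real.sqrt Y) * Real.sqrt Y) := by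
        gcongr
    _ = 3 * nH * Y := by
        rw [mul_assoc nH, Real.mul_self_sqrt hYnn]
        ring
end

section
/- Suppose a nonnegative sequence (δ_t)_{t≥1} satisfies δ_{t+1} ≤ δ_t − c·δ_t^{2−2ξ} for all t ≥ 1, where c > 0, ξ < 1/2, and δ_1 > 0 with c·δ_1^{1−2ξ} ≤ 1. Then for all t ≥ 1, δ_t ≤ (δ_1^{−(1−2ξ)} + (1−2ξ)·c·(t−1))^{−1/(1−2ξ)}. -/
lemma key_ineq (s α : ℝ) (hs0 : 0 < s) (hα : 0 ≤ α) :
    1 + α * (1 - s) ≤ s ^ (-α) := by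
  have h1 : Real.log s ≤ s - 1 := Real.log_le_sub_one_of_pos hs0
  have h2 : s ^ (-α) = Real.exp (-α * Real.log s) := by
    rw [Real.rpow_def_of_pos hs0, mul_comm]
  rw [h2]
  have h3 : 1 + (-α * Real.log s) ≤ Real.exp (-α * Real.log s) := by
    linarith [Real.add_one_le_exp (-α * Real.log s)]
  nlinarith

theorem stmt_17 (δ : ℕ → ℝ) (c ξ : ℝ) (hc : 0 < c) (hξ : ξ < 1 / 2)
    (hδ1 : 0 < δ 1) (hinit : c * δ 1 ^ (1 - 2 * ξ) ≤ 1)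
    (hnonneg : ∀ t ≥ 1, 0 ≤ δ t)
    (hrec : ∀ t ≥ 1, δ (t + 1) ≤ δ t - c * δ t ^ (2 - 2 * ξ)) :
    ∀ t ≥ 1, δ t ≤
      (δ 1 ^ (-(1 - 2 * ξ)) + (1 - 2 * ξ) * c * ((t : ℝ) - 1)) ^ (-(1 / (1 - 2 * ξ))) := by
  set α : ℝ := 1 - 2 * ξ with hαdef
  have hα : 0 < α := by simp only [hαdef]; linarith
  have hA : 0 < δ 1 ^ (-α) := Real.rpow_pos_of_pos hδ1 _
  have hmono : ∀ t ≥ 1, δ t ≤ δ 1 := by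
    intro t ht
    induction t, ht using Nat.le_induction with
    | base => exact le_refl _
    | succ n hn ih =>
      have h := hrec n hn
      have h0 : 0 ≤ c * δ n ^ (2 - 2 * ξ) :=
        mul_nonneg hc.le (Real.rpow_nonneg (hnonneg n hn) _)
      linarith
  intro t ht
  induction t, ht using Nat.le_induction with
  | base =>
    have hcast : ((1 : ℕ) : ℝ) - 1 = 0 := by norm_num
    rw [hcast, mul_zero, add_zero, ← Real.rpow_mul hδ1.le,
      show (-α) * (-(1 / α)) = 1 by field_simp, Real.rpow_one]
  | succ n hn ih =>
    set u : ℝ := δ 1 ^ (-α) + α * c * ((n : ℝ) - 1) with hudef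
    have hu : 0 < u := by
      have : (0:ℝ) ≤ α * c * ((n : ℝ) - 1) := by
        apply mul_nonneg (mul_nonneg hα.le hc.le)
        have : (1:ℝ) ≤ (n:ℝ) := by exact_mod_cast hn
        linarith
      positivity
    have hgoal_eq : δ 1 ^ (-α) + α * c * (((n + 1 : ℕ) : ℝ) - 1) = u + α * c := by
      push_cast; ring
    rw [hgoal_eq]
    have hu' : 0 < u + α * c := by positivity
    have hRHSpos : 0 < (u + α * c) ^ (-(1 / α)) := Real.rpow_pos_of_pos hu' _
    have hx0 := hnonneg n hn
    rcases hx0.eq_or_lt with hx | hx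
    · -- δ n = 0
      have h := hrec n hn
      rw [← hx, Real.zero_rpow (by linarith : (0:ℝ) < 2 - 2*ξ).ne'] at h
      simp at h
      linarith
    · -- δ n > 0
      set x : ℝ := δ n with hxdef
      set θ : ℝ := c * x ^ α with hθdef
      have hθpos : 0 < θ := mul_pos hc (Real.rpow_pos_of_pos hx _)
      have hθle1 : θ ≤ 1 := by
        have hxle : x ≤ δ 1 := hmono n hn
        have : x ^ α ≤ δ 1 ^ α := Real.rpow_le_rpow hx.le hxle hα.le
        calc θ = c * x ^ α := rfl
          _ ≤ c * δ 1 ^ α := by nlinarith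
          _ ≤ 1 := hinit
      have hstep : δ (n + 1) ≤ x * (1 - θ) := by
        have h := hrec n hn
        have hpow : x ^ (2 - 2 * ξ) = x * x ^ α := by
          rw [show (2 - 2 * ξ) = 1 + α by rw [hαdef]; ring, Real.rpow_add hx,
            Real.rpow_one]
        rw [hpow] at h
        calc δ (n + 1) ≤ x - c * (x * x ^ α) := h
          _ = x * (1 - θ) := by rw [hθdef]; ring
      rcases hθle1.eq_or_lt with hθ1 | hθ1
      · have : x * (1 - θ) = 0 := by rw [hθ1]; ring
        linarith
      · -- θ < 1
        set s : ℝ := 1 - θ with hsdef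
        have hs0 : 0 < s := by simp only [hsdef]; linarith
        have hxs : 0 < x * s := mul_pos hx hs0
        -- from ih : x ≤ u ^ (-(1/α)), deduce u ≤ x ^ (-α)
        have hinv : u ≤ x ^ (-α) := by
          have h1 : (u ^ (-(1 / α))) ^ (-α) ≤ x ^ (-α) :=
            Real.rpow_le_rpow_of_nonpos hx ih (by linarith)
          rwa [← Real.rpow_mul hu.le, show (-(1/α)) * (-α) = 1 by field_simp,
            Real.rpow_one] at h1
        have hθxinv : θ * x ^ (-α) = c := by
          rw [hθdef, mul_assoc, ← Real.rpow_add hx]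
          simp
        have hkey : 1 + α * θ ≤ s ^ (-α) := by
          have := key_ineq s α hs0 hα.le
          have h1s : 1 - s = θ := by rw [hsdef]; ring
          rwa [h1s] at this
        have hmain : u + α * c ≤ (x * s) ^ (-α) := by
          rw [Real.mul_rpow hx.le hs0.le]
          have hxα : 0 < x ^ (-α) := Real.rpow_pos_of_pos hx _
          have : x ^ (-α) * (1 + α * θ) ≤ x ^ (-α) * s ^ (-α) := by
            exact mul_le_mul_of_nonneg_left hkey hxα.le
          have hexp : x ^ (-α) * (1 + α * θ) = x ^ (-α) + α * c := by
            linear_combination α * hθxinv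
          rw [hexp] at this
          linarith
        -- apply antitone rpow with exponent -(1/α)
        have hfinal : (u + α * c) ^ (-(1 / α)) ≥ x * s := by
          have h1 : ((x * s) ^ (-α)) ^ (-(1 / α)) ≤ (u + α * c) ^ (-(1 / α)) :=
            Real.rpow_le_rpow_of_nonpos hu' hmain (by
              have : 0 < 1 / α := by positivity
              linarith)
          rwa [← Real.rpow_mul hxs.le, show (-α) * (-(1/α)) = 1 by field_simp,
            Real.rpow_one] at h1
        exact le_trans (by rw [hsdef] at hstep ⊢; exact hstep) hfinal
end
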